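/- Let G be a compact Lie group and let f : A → B be a based G-map between cofibrant objects. A G-connected based G-space X is local with respect to Σf : ΣA → ΣB (with trivial G-action on the suspension coordinate) if and only if the based loop space ΩX is f-local. -/

import Mathlib

noncomputable section

namespace EquivLoc

/-! ## Weak homotopy equivalences of topological spaces -/

section Plain

variable {A B : Type} [TopologicalSpace A] [TopologicalSpace B]

/-- The induced map on path components. -/
def pi0Map (f : C(A, B)) : ZerothHomotopy A → ZerothHomotopy B :=
  Quotient.map f (fun _ _ h => Nonempty.map (fun p => p.map f.continuous) h)

/-- The induced map on homotopy groups (classes of generalized loops). -/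
def piMap (n : ℕ) (f : C(A, B)) (a : A) :
    HomotopyGroup (Fin n) A a → HomotopyGroup (Fin n) B (f a) :=
  Quotient.map
    (fun p => ⟨f.comp p.1, fun y hy => by
      simp [ContinuousMap.comp_apply, p.2 y hy]⟩)
    (fun p q h => h.map fun H => H.compContinuousMap f)

/-- A continuous map is a weak homotopy equivalence if it induces a bijection on path
components and on all homotopy groups at all basepoints. -/
def IsWeakHomotopyEquiv (f : C(A, B)) : Prop :=
  Function.Bijective (pi0Map f) ∧ ∀ (a : A) (n : ℕ), Function.Bijective (piMap (n + 1) f a)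

/-- A map is a Serre fibration if it has the homotopy lifting property with respect to
all cubes. -/
def IsSerreFibration (p : C(A, B)) : Prop :=
  ∀ (n : ℕ) (h : C((Fin n → unitInterval), A)) (K : C(((Fin n → unitInterval) × unitInterval), B)),
    (∀ z, K (z, 0) = p (h z)) →
    ∃ L : C(((Fin n → unitInterval) × unitInterval), A), (∀ z, L (z, 0) = h z) ∧ ∀ w, p (L w) = K w

end Plain

/-! ## `G`-spaces -/

variable (G : Type) [Group G] [TopologicalSpace G]

/-- A `G`-space: a topological space with an action of `G` by homeomorphisms. -/
structure GSpace where
  carrier : Type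
  [topInst : TopologicalSpace carrier]
  [mulInst : MulAction G carrier]
  smul_cont : ∀ g : G, Continuous fun x : carrier => g • x

attribute [instance] GSpace.topInst GSpace.mulInst

variable {G}

/-- The action of `g` as a continuous self-map. -/
def GSpace.smulCM (X : GSpace G) (g : G) : C(X.carrier, X.carrier) :=
  ⟨fun x => g • x, X.smul_cont g⟩

/-- Equivariant continuous maps of `G`-spaces. -/
@[ext]
structure GMap (X Y : GSpace G) where
  toCM : C(X.carrier, Y.carrier)
  equivar : ∀ (g : G) (x : X.carrier), toCM (g • x) = g • toCM x

instance {X Y : GSpace G} : CoeFun (GMap X Y) (fun _ => X.carrier → Y.carrier) :=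
  ⟨fun f => f.toCM⟩

/-- The identity `G`-map. -/
protected def GMap.id (X : GSpace G) : GMap X X :=
  ⟨ContinuousMap.id _, fun _ _ => rfl⟩

/-- Composition of `G`-maps. -/
def GMap.comp {X Y Z : GSpace G} (f : GMap Y Z) (g : GMap X Y) : GMap X Z :=
  ⟨f.toCM.comp g.toCM, fun a x => by
    simp only [ContinuousMap.comp_apply, g.equivar, f.equivar]⟩

/-- The `H`-fixed point space of a `G`-space. -/
abbrev Fix (H : Subgroup G) (X : GSpace G) : Type :=
  {x : X.carrier // ∀ h ∈ H, h • x = x}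

/-- The map induced on `H`-fixed points by a `G`-map. -/
def GMap.fixCM {X Y : GSpace G} (f : GMap X Y) (H : Subgroup G) : C(Fix H X, Fix H Y) :=
  ⟨fun x => ⟨f x.1, fun h hh => by rw [← f.equivar, x.2 h hh]⟩,
    Continuous.subtype_mk (f.toCM.continuous.comp continuous_subtype_val) _⟩

/-- A `G`-map is a `G`-weak equivalence if it is a weak homotopy equivalence on the
`H`-fixed points for all closed subgroups `H ≤ G`. -/
def IsGWeakEquiv {X Y : GSpace G} (f : GMap X Y) : Prop :=
  ∀ H : Subgroup G, IsClosed (H : Set G) → IsWeakHomotopyEquiv (f.fixCM H)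

/-- A `G`-map is a `G`-fibration if it is a Serre fibration on the `H`-fixed points for
all closed subgroups `H ≤ G`. -/
def IsGFibration {X Y : GSpace G} (f : GMap X Y) : Prop :=
  ∀ H : Subgroup G, IsClosed (H : Set G) → IsSerreFibration (f.fixCM H)

/-- The one-point `G`-space. -/
def ptG : GSpace G where
  carrier := PUnit
  mulInst := { smul := fun _ x => x, one_smul := fun _ => rfl, mul_smul := fun _ _ _ => rfl }
  smul_cont := fun _ => continuous_id

/-- The unique `G`-map to the one-point `G`-space. -/
def GMap.toPt (X : GSpace G) : GMap X (ptG (G := G)) :=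
  ⟨⟨fun _ => PUnit.unit, continuous_const⟩, fun _ _ => rfl⟩

/-- A `G`-space is fibrant if the map to the point is a `G`-fibration. -/
def GFibrant (X : GSpace G) : Prop :=
  IsGFibration (GMap.toPt X)

/-- Trivial `G`-fibrations: simultaneously `G`-fibrations and `G`-weak equivalences. -/
def IsGTrivFib {X Y : GSpace G} (f : GMap X Y) : Prop :=
  IsGFibration f ∧ IsGWeakEquiv f

/-- A `G`-space is cofibrant if it has the left lifting property (for maps from it)
against all trivial `G`-fibrations. -/
def GCofibrant (A : GSpace G) : Prop :=
  ∀ {X Y : GSpace G} (p : GMap X Y), IsGTrivFib p →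
    ∀ v : GMap A Y, ∃ l : GMap A X, p.comp l = v

/-- A `G`-map is a cofibration if it has the left lifting property against all trivial
`G`-fibrations. -/
def IsGCofibration {A B : GSpace G} (i : GMap A B) : Prop :=
  ∀ {X Y : GSpace G} (p : GMap X Y), IsGTrivFib p →
    ∀ (u : GMap A X) (v : GMap B Y), p.comp u = v.comp i →
      ∃ l : GMap B X, l.comp i = u ∧ p.comp l = v

/-! ## Mapping `G`-spaces with the conjugation action -/

/-- The mapping space `Map(A, X)` with the conjugation `G`-action. -/
def mapG (A X : GSpace G) : GSpace G where
  carrier := C(A.carrier, X.carrier)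
  mulInst :=
    { smul := fun g φ => (X.smulCM g).comp (φ.comp (A.smulCM g⁻¹))
      one_smul := fun φ => by
        ext a
        show (X.smulCM 1) (φ ((A.smulCM 1⁻¹) a)) = φ a
        simp [GSpace.smulCM]
      mul_smul := fun g h φ => by
        ext a
        show (X.smulCM (g * h)) (φ ((A.smulCM (g * h)⁻¹) a))
            = (X.smulCM g) ((X.smulCM h) (φ ((A.smulCM h⁻¹) ((A.smulCM g⁻¹) a))))
        simp [GSpace.smulCM, mul_smul, mul_inv_rev] }
  smul_cont := fun g =>
    (ContinuousMap.continuous_postcomp (X.smulCM g)).comp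
      (ContinuousMap.continuous_precomp (A.smulCM g⁻¹))

/-- Precomposition with a `G`-map, as a `G`-map of conjugation mapping spaces. -/
def precompG {A B : GSpace G} (f : GMap A B) (X : GSpace G) :
    GMap (mapG B X) (mapG A X) where
  toCM := ⟨fun φ => φ.comp f.toCM, ContinuousMap.continuous_precomp f.toCM⟩
  equivar := fun g φ => by
    show ((X.smulCM g).comp (φ.comp (B.smulCM g⁻¹))).comp f.toCM
        = (X.smulCM g).comp ((φ.comp f.toCM).comp (A.smulCM g⁻¹))
    ext a
    simp [GSpace.smulCM, f.equivar]
    exact congrArg (fun x => ContinuousMap.toFun (X := B.carrier) (Y := X.carrier) φ x)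
      (f.equivar g⁻¹ a).symm

/-- A `G`-space `X` is `f`-local if `X` is fibrant and the induced map
`Map(B, X) → Map(A, X)` of conjugation mapping spaces is a `G`-weak equivalence. -/
def IsFLocal {A B : GSpace G} (f : GMap A B) (X : GSpace G) : Prop :=
  GFibrant X ∧ IsGWeakEquiv (precompG f X)

/-! ## `G`-homotopies -/

/-- Two `G`-maps are `G`-homotopic if there is an equivariant homotopy between them,
where `G` acts trivially on the interval coordinate. -/
def GHomotopic {X Y : GSpace G} (f₀ f₁ : GMap X Y) : Prop :=
  ∃ H : C(X.carrier × unitInterval, Y.carrier),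
    (∀ x, H (x, 0) = f₀ x) ∧ (∀ x, H (x, 1) = f₁ x) ∧
      ∀ (g : G) (x : X.carrier) (t : unitInterval), H (g • x, t) = g • H (x, t)

/-- A `G`-map is a `G`-homotopy equivalence if it admits an inverse up to `G`-homotopy. -/
def IsGHtpyEquivMap {X Y : GSpace G} (u : GMap X Y) : Prop :=
  ∃ v : GMap Y X, GHomotopic (v.comp u) (GMap.id X) ∧ GHomotopic (u.comp v) (GMap.id Y)

/-- Two `G`-spaces are `G`-homotopy equivalent. -/
def GHtpyEquiv (X Y : GSpace G) : Prop :=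
  ∃ u : GMap X Y, IsGHtpyEquivMap u

/-- The product of two `G`-spaces with the diagonal action. -/
def prodG (X Y : GSpace G) : GSpace G where
  carrier := X.carrier × Y.carrier
  smul_cont := fun g =>
    ((X.smul_cont g).comp continuous_fst).prodMk ((Y.smul_cont g).comp continuous_snd)

/-! ## The equivariant localization functor -/

/-- The data of a coaugmented localization functor `L_f^G` with respect to a `G`-map `f`:
a functor `L` on `G`-spaces together with a natural coaugmentation `j_X : X → L X` such
that each `L X` is `f`-local and `j_X` is universal (up to `G`-homotopy) among `G`-maps
from `X` into `f`-local `G`-spaces. -/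
structure GLocalization {A B : GSpace G} (f : GMap A B) where
  L : GSpace G → GSpace G
  map : ∀ {X Y : GSpace G}, GMap X Y → GMap (L X) (L Y)
  j : ∀ X : GSpace G, GMap X (L X)
  map_id : ∀ X : GSpace G, map (GMap.id X) = GMap.id (L X)
  map_comp : ∀ {X Y Z : GSpace G} (u : GMap X Y) (v : GMap Y Z),
    map (v.comp u) = (map v).comp (map u)
  naturality : ∀ {X Y : GSpace G} (u : GMap X Y), (j Y).comp u = (map u).comp (j X)
  isLocal : ∀ X : GSpace G, IsFLocal f (L X)
  factor : ∀ {X Y : GSpace G}, IsFLocal f Y → ∀ u : GMap X Y,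
    ∃ k : GMap (L X) Y, GHomotopic (k.comp (j X)) u
  unique : ∀ {X Y : GSpace G}, IsFLocal f Y → ∀ (u : GMap X Y) (k k' : GMap (L X) Y),
    GHomotopic (k.comp (j X)) u → GHomotopic (k'.comp (j X)) u → GHomotopic k k'

end EquivLoc
namespace EquivLoc

variable {G : Type} [Group G] [TopologicalSpace G]

/-! ## Based `G`-spaces -/

/-- A based `G`-space: a `G`-space with a `G`-fixed basepoint. -/
structure GSpacePt (G : Type) [Group G] [TopologicalSpace G] extends GSpace G where
  pt : carrier
  pt_fixed : ∀ g : G, g • pt = pt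

/-- Based `G`-maps. -/
structure GMapPt (X Y : GSpacePt G) extends GMap X.toGSpace Y.toGSpace where
  map_pt : toCM X.pt = Y.pt

/-- The identity based `G`-map. -/
protected def GMapPt.id (X : GSpacePt G) : GMapPt X X :=
  ⟨GMap.id X.toGSpace, rfl⟩

/-- Composition of based `G`-maps. -/
def GMapPt.comp {X Y Z : GSpacePt G} (f : GMapPt Y Z) (g : GMapPt X Y) : GMapPt X Z :=
  ⟨(f.toGMap).comp g.toGMap, by
    show f.toCM (g.toCM X.pt) = Z.pt
    rw [g.map_pt, f.map_pt]⟩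

/-- Based `G`-homotopy: an equivariant homotopy which is constant at the basepoint. -/
def GHomotopicPt {X Y : GSpacePt G} (f₀ f₁ : GMapPt X Y) : Prop :=
  ∃ H : C(X.carrier × unitInterval, Y.carrier),
    (∀ x, H (x, 0) = f₀.toCM x) ∧ (∀ x, H (x, 1) = f₁.toCM x) ∧
      (∀ (g : G) (x : X.carrier) (t : unitInterval), H (g • x, t) = g • H (x, t)) ∧
      ∀ t : unitInterval, H (X.pt, t) = Y.pt

/-- A based `G`-map is a based `G`-homotopy equivalence if it admits an inverse up to
based `G`-homotopy. -/
def IsGHtpyEquivMapPt {X Y : GSpacePt G} (u : GMapPt X Y) : Prop :=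
  ∃ v : GMapPt Y X,
    GHomotopicPt (v.comp u) (GMapPt.id X) ∧ GHomotopicPt (u.comp v) (GMapPt.id Y)

/-- Two based `G`-spaces are based `G`-homotopy equivalent. -/
def GHtpyEquivPt (X Y : GSpacePt G) : Prop :=
  ∃ u : GMapPt X Y, IsGHtpyEquivMapPt u

/-- The one-point based `G`-space. -/
def ptGPt : GSpacePt G where
  toGSpace := ptG (G := G)
  pt := PUnit.unit
  pt_fixed := fun _ => rfl

/-- Based cofibrancy: the left lifting property, in the based category, against all
trivial `G`-fibrations. -/
def GCofibrantPt (A : GSpacePt G) : Prop :=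
  ∀ {X Y : GSpacePt G} (p : GMapPt X Y), IsGTrivFib p.toGMap →
    ∀ v : GMapPt A Y, ∃ l : GMapPt A X, p.comp l = v

/-! ## Based mapping spaces with conjugation action -/

/-- The conjugation of a based continuous map. -/
def conjCM (A X : GSpacePt G) (g : G)
    (φ : C(A.carrier, X.carrier)) : C(A.carrier, X.carrier) :=
  (X.toGSpace.smulCM g).comp (φ.comp (A.toGSpace.smulCM g⁻¹))

lemma conjCM_pt (A X : GSpacePt G) (g : G) (φ : C(A.carrier, X.carrier))
    (hφ : φ A.pt = X.pt) : conjCM A X g φ A.pt = X.pt := by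
  show g • φ (g⁻¹ • A.pt) = X.pt
  rw [A.pt_fixed, hφ, X.pt_fixed]

/-- The based mapping space `Map₊(A, X)` with the conjugation `G`-action. -/
def mapGPt (A X : GSpacePt G) : GSpacePt G where
  carrier := {φ : C(A.carrier, X.carrier) // φ A.pt = X.pt}
  mulInst :=
    { smul := fun g φ => ⟨conjCM A X g φ.1, conjCM_pt A X g φ.1 φ.2⟩
      one_smul := fun φ => by
        apply Subtype.ext
        ext a
        show (1 : G) • φ.1 ((1 : G)⁻¹ • a) = φ.1 a
        simp
      mul_smul := fun g h φ => by
        apply Subtype.ext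
        ext a
        show (g * h) • φ.1 ((g * h)⁻¹ • a) = g • (h • φ.1 (h⁻¹ • g⁻¹ • a))
        simp [mul_smul, mul_inv_rev] }
  smul_cont := fun g => by
    apply Continuous.subtype_mk
    exact ((ContinuousMap.continuous_postcomp (X.toGSpace.smulCM g)).comp
      (ContinuousMap.continuous_precomp (A.toGSpace.smulCM g⁻¹))).comp
      continuous_subtype_val
  pt := ⟨ContinuousMap.const _ X.pt, rfl⟩
  pt_fixed := fun g => by
    apply Subtype.ext
    ext a
    show g • X.pt = X.pt
    exact X.pt_fixed g

lemma precomp_mem {A B : GSpacePt G} (f : GMapPt A B) (X : GSpacePt G)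
    (φ : {ψ : C(B.carrier, X.carrier) // ψ B.pt = X.pt}) :
    (φ.1.comp f.toCM) A.pt = X.pt := by
  show φ.1 (f.toCM A.pt) = X.pt
  rw [f.map_pt, φ.2]

/-- Precomposition with a based `G`-map, as a based `G`-map of based mapping spaces. -/
def precompGPt {A B : GSpacePt G} (f : GMapPt A B) (X : GSpacePt G) :
    GMapPt (mapGPt B X) (mapGPt A X) where
  toCM := ⟨fun φ => ⟨φ.1.comp f.toCM, precomp_mem f X φ⟩,
    Continuous.subtype_mk
      ((ContinuousMap.continuous_precomp f.toCM).comp continuous_subtype_val)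
      (fun φ => precomp_mem f X φ)⟩
  equivar := fun g φ => by
    apply Subtype.ext
    ext a
    show g • φ.1 (g⁻¹ • f.toCM a) = g • φ.1 (f.toCM (g⁻¹ • a))
    rw [f.equivar]
  map_pt := by
    apply Subtype.ext
    ext a
    rfl

/-- A based `G`-space `X` is `f`-local, for a based `G`-map `f : A → B`, if `X` is fibrant
and the induced map `Map₊(B, X) → Map₊(A, X)` is a `G`-weak equivalence. -/
def IsFLocalPt {A B : GSpacePt G} (f : GMapPt A B) (X : GSpacePt G) : Prop :=
  GFibrant X.toGSpace ∧ IsGWeakEquiv (precompGPt f X).toGMap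

/-! ## Loop spaces -/

/-- The based loop space of a based `G`-space, with the pointwise `G`-action. -/
def Loop (X : GSpacePt G) : GSpacePt G where
  carrier := {γ : C(unitInterval, X.carrier) // γ 0 = X.pt ∧ γ 1 = X.pt}
  mulInst :=
    { smul := fun g γ => ⟨(X.toGSpace.smulCM g).comp γ.1, by
        show g • γ.1 0 = X.pt ∧ g • γ.1 1 = X.pt
        rw [γ.2.1, γ.2.2, X.pt_fixed]; exact ⟨rfl, rfl⟩⟩
      one_smul := fun γ => by
        apply Subtype.ext; ext t
        show (1 : G) • γ.1 t = γ.1 t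
        simp
      mul_smul := fun g h γ => by
        apply Subtype.ext; ext t
        show (g * h) • γ.1 t = g • h • γ.1 t
        rw [mul_smul] }
  smul_cont := fun g => by
    apply Continuous.subtype_mk
    exact (ContinuousMap.continuous_postcomp (X.toGSpace.smulCM g)).comp
      continuous_subtype_val
  pt := ⟨ContinuousMap.const _ X.pt, rfl, rfl⟩
  pt_fixed := fun g => by
    apply Subtype.ext; ext t
    show g • X.pt = X.pt
    exact X.pt_fixed g

/-- Iterated loop space. -/
def LoopIter : ℕ → GSpacePt G → GSpacePt G
  | 0, X => X
  | n + 1, X => Loop (LoopIter n X)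

/-! ## Reduced suspension -/

/-- The relation collapsing `A × {0} ∪ A × {1} ∪ {pt} × I` to a point. -/
def suspRel (X : GSpacePt G) (a b : X.carrier × unitInterval) : Prop :=
  a = b ∨ ((a.2 = 0 ∨ a.2 = 1 ∨ a.1 = X.pt) ∧ (b.2 = 0 ∨ b.2 = 1 ∨ b.1 = X.pt))

/-- The `G`-action on the reduced suspension. -/
instance suspAction (X : GSpacePt G) : MulAction G (Quot (suspRel X)) where
  smul := fun g => Quot.lift (fun z => Quot.mk _ (g • z.1, z.2))
        (by
          rintro a b (rfl | ⟨ha, hb⟩)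
          · rfl
          · apply Quot.sound
            right
            constructor
            · rcases ha with h | h | h
              · exact Or.inl h
              · exact Or.inr (Or.inl h)
              · refine Or.inr (Or.inr ?_)
                show g • a.1 = X.pt
                rw [h, X.pt_fixed]
            · rcases hb with h | h | h
              · exact Or.inl h
              · exact Or.inr (Or.inl h)
              · refine Or.inr (Or.inr ?_)
                show g • b.1 = X.pt
                rw [h, X.pt_fixed])
  one_smul := fun q => by
    refine Quot.inductionOn q fun z => ?_
    show Quot.mk _ ((1 : G) • z.1, z.2) = Quot.mk _ z
    rw [one_smul]
  mul_smul := fun g h q => by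
    refine Quot.inductionOn q fun z => ?_
    show Quot.mk _ ((g * h) • z.1, z.2) = Quot.mk _ (g • (h • z.1), z.2)
    rw [mul_smul]

/-- The reduced suspension of a based `G`-space, with trivial action on the suspension
coordinate. -/
def Susp (X : GSpacePt G) : GSpacePt G where
  carrier := Quot (suspRel X)
  smul_cont := fun g => by
    apply continuous_quot_lift
    exact continuous_quot_mk.comp
      (((X.smul_cont g).comp continuous_fst).prodMk continuous_snd)
  pt := Quot.mk _ (X.pt, 0)
  pt_fixed := fun g => by
    show Quot.mk _ (g • X.pt, (0 : unitInterval)) = Quot.mk _ (X.pt, (0 : unitInterval))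
    rw [X.pt_fixed]

/-- The suspension of a based continuous map, as a continuous map. -/
def suspCM {X Y : GSpacePt G} (f : GMapPt X Y) :
    C(Quot (suspRel X), Quot (suspRel Y)) :=
  ⟨Quot.lift (fun z => Quot.mk _ (f.toCM z.1, z.2))
(by
      rintro a b (rfl | ⟨ha, hb⟩)
      · rfl
      · apply Quot.sound
        right
        constructor
        · rcases ha with h | h | h
          · exact Or.inl h
          · exact Or.inr (Or.inl h)
          · refine Or.inr (Or.inr ?_)
            show f.toCM a.1 = Y.pt
            rw [h, f.map_pt]
        · rcases hb with h | h | h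
          · exact Or.inl h
          · exact Or.inr (Or.inl h)
          · refine Or.inr (Or.inr ?_)
            show f.toCM b.1 = Y.pt
            rw [h, f.map_pt]),
    by
      apply continuous_quot_lift
      exact continuous_quot_mk.comp
        ((f.toCM.continuous.comp continuous_fst).prodMk continuous_snd)⟩

lemma suspCM_mk {X Y : GSpacePt G} (f : GMapPt X Y) (z : X.carrier × unitInterval) :
    (suspCM f) (Quot.mk (suspRel X) z) = Quot.mk (suspRel Y) (f.toCM z.1, z.2) := rfl

lemma susp_smul_mk (X : GSpacePt G) (g : G) (z : X.carrier × unitInterval) :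
    (g • Quot.mk (suspRel X) z : Quot (suspRel X)) = Quot.mk (suspRel X) (g • z.1, z.2) := rfl

/-- The suspension of a based `G`-map. -/
def SuspMap {X Y : GSpacePt G} (f : GMapPt X Y) : GMapPt (Susp X) (Susp Y) where
  toCM := suspCM f
  equivar := fun g q => by
    refine Quot.inductionOn q fun z => ?_
    show (suspCM f) (g • Quot.mk (suspRel X) z) = g • ((suspCM f) (Quot.mk (suspRel X) z))
    rw [susp_smul_mk, suspCM_mk, suspCM_mk, susp_smul_mk, f.equivar]
  map_pt := by
    show Quot.mk _ (f.toCM X.pt, (0 : unitInterval)) = Quot.mk _ (Y.pt, (0 : unitInterval))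
    rw [f.map_pt]

/-- Iterated reduced suspension. -/
def SuspIter : ℕ → GSpacePt G → GSpacePt G
  | 0, X => X
  | n + 1, X => Susp (SuspIter n X)

/-- Iterated suspension of a based `G`-map. -/
def SuspMapIter : ∀ (n : ℕ) {X Y : GSpacePt G}, GMapPt X Y → GMapPt (SuspIter n X) (SuspIter n Y)
  | 0, _, _, f => f
  | n + 1, _, _, f => SuspMap (SuspMapIter n f)

/-! ## Connectivity -/

/-- A `G`-space is `G`-connected if all fixed point spaces of closed subgroups are
connected. -/
def GConnected (X : GSpace G) : Prop :=
  ∀ H : Subgroup G, IsClosed (H : Set G) → ConnectedSpace (Fix H X)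

/-- The basepoint of the `H`-fixed point space of a based `G`-space. -/
def fixPt (H : Subgroup G) (X : GSpacePt G) : Fix H X.toGSpace :=
  ⟨X.pt, fun h _ => X.pt_fixed h⟩

/-- A based `G`-space is `G`-simply connected if all fixed point spaces of closed
subgroups are path connected and simply connected. -/
def GSimplyConnected (Y : GSpacePt G) : Prop :=
  ∀ H : Subgroup G, IsClosed (H : Set G) →
    Subsingleton (ZerothHomotopy (Fix H Y.toGSpace)) ∧
      Subsingleton (HomotopyGroup (Fin 1) (Fix H Y.toGSpace) (fixPt H Y))

/-! ## Based equivariant localization -/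

/-- The data of a coaugmented localization functor `L_f^G` on based `G`-spaces with
respect to a based `G`-map `f`. -/
structure GLocalizationPt {A B : GSpacePt G} (f : GMapPt A B) where
  L : GSpacePt G → GSpacePt G
  map : ∀ {X Y : GSpacePt G}, GMapPt X Y → GMapPt (L X) (L Y)
  j : ∀ X : GSpacePt G, GMapPt X (L X)
  map_id : ∀ X : GSpacePt G, map (GMapPt.id X) = GMapPt.id (L X)
  map_comp : ∀ {X Y Z : GSpacePt G} (u : GMapPt X Y) (v : GMapPt Y Z),
    map (v.comp u) = (map v).comp (map u)
  naturality : ∀ {X Y : GSpacePt G} (u : GMapPt X Y), (j Y).comp u = (map u).comp (j X)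
  isLocal : ∀ X : GSpacePt G, IsFLocalPt f (L X)
  factor : ∀ {X Y : GSpacePt G}, IsFLocalPt f Y → ∀ u : GMapPt X Y,
    ∃ k : GMapPt (L X) Y, GHomotopicPt (k.comp (j X)) u
  unique : ∀ {X Y : GSpacePt G}, IsFLocalPt f Y → ∀ (u : GMapPt X Y) (k k' : GMapPt (L X) Y),
    GHomotopicPt (k.comp (j X)) u → GHomotopicPt (k'.comp (j X)) u → GHomotopic k.toGMap k'.toGMap

/-- A based `G`-space `A` is `L^G`-good if for every based `G`-map `f` between cofibrant
based `G`-spaces, every localization functor `L_f^G` for `f`, and every based `G`-space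
`X`, the localization `L_f^G Map₊(A, X)` is based `G`-homotopy equivalent to `Map₊(A, Y)`
for some `G`-simply connected based `G`-space `Y`. -/
def IsLGoodPt (A : GSpacePt G) : Prop :=
  ∀ {C D : GSpacePt G} (f : GMapPt C D), GCofibrantPt C → GCofibrantPt D →
    ∀ (Lf : GLocalizationPt f) (X : GSpacePt G),
      ∃ Y : GSpacePt G, GSimplyConnected Y ∧ GHtpyEquivPt (Lf.L (mapGPt A X)) (mapGPt A Y)

end EquivLoc

/-!
The loop-suspension adjunction `Map₊(ΣA, X) ≅ Map₊(A, ΩX)` is an equivariant bijection, natural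
in `A`, so it identifies the restriction map along `Σf` with the one along `f`. It need not be a
homeomorphism of mapping spaces, but when `A` is generated by cubes both directions are continuous
on every map out of a cube, and homotopy groups of fixed points only see such maps. Cofibrant spaces
are cube-generated: `A` retopologized by its maps from cubes maps to `A` by a trivial fibration,
and a lift of the identity of `A` through it is continuous. Finally every `G`-space is fibrant,
as any map to a point is a Serre fibration.
-/

open scoped unitInterval

namespace Topology

abbrev Cube (n : ℕ) : Type := Fin n → I

lemma isGeneratedBy_cube_of_homeomorph {Z : Type} [TopologicalSpace Z] {n : ℕ}
    (e : Cube n ≃ₜ Z) : IsGeneratedBy Cube Z :=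
  e.isQuotientMap.isGeneratedBy

instance : IsGeneratedBy Cube I :=
  isGeneratedBy_cube_of_homeomorph (Homeomorph.funUnique (Fin 1) I)

instance (n : ℕ) : IsGeneratedBy Cube (I × Cube n) :=
  isGeneratedBy_cube_of_homeomorph <| (Fin.appendHomeomorph 1 n).symm.trans
    ((Homeomorph.funUnique (Fin 1) I).prodCongr (Homeomorph.refl _))

instance (n : ℕ) : IsGeneratedBy Cube (Cube n × I) :=
  isGeneratedBy_cube_of_homeomorph <| (Fin.appendHomeomorph 1 n).symm.trans
    (((Homeomorph.funUnique (Fin 1) I).prodCongr (Homeomorph.refl _)).trans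
      (Homeomorph.prodComm _ _))

lemma continuous_prod_of_forall_cube {A Y Z : Type} [TopologicalSpace A] [TopologicalSpace Y]
    [TopologicalSpace Z] [IsGeneratedBy Cube A] [LocallyCompactSpace Y] {g : A × Y → Z}
    (hg : ∀ n (c : C(Cube n, A)), Continuous fun p : Cube n × Y => g (c p.1, p.2)) :
    Continuous g := by
  -- `W` is continuous as `A` is cube-generated, and evaluation on `C(Y, Z)` is continuous as `Y`
  -- is locally compact.
  let W : A → C(Y, Z) := fun a =>
    ⟨fun y => g (a, y), (hg 0 (.const _ a)).comp
      ((continuous_const (y := (Fin.elim0 : Cube 0))).prodMk continuous_id)⟩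
  have hW : Continuous W := (IsGeneratedBy.continuous_iff Cube W).2 fun n c =>
    ContinuousMap.continuous_of_continuous_uncurry _ (hg n c)
  exact (hW.comp continuous_fst).eval continuous_snd

namespace ContinuousGeneratedBy

variable {A B : Type} [TopologicalSpace A] [TopologicalSpace B] {g : A → B}

lemma continuous_comp {Z : Type} [TopologicalSpace Z]
    [IsGeneratedBy Cube Z] (hg : ContinuousGeneratedBy Cube g) (c : C(Z, A)) :
    Continuous (g ∘ c) :=
  (IsGeneratedBy.continuous_iff Cube _).2 fun _ c' => hg (c.comp c')

lemma subtype_map {p : A → Prop} {q : B → Prop}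
    (hg : ContinuousGeneratedBy Cube g) (h : ∀ a, p a → q (g a)) :
    ContinuousGeneratedBy Cube (Subtype.map g h) :=
  fun _ c => (hg (ContinuousMap.comp ⟨Subtype.val, continuous_subtype_val⟩ c)).subtype_mk _

def mapPath (hg : ContinuousGeneratedBy Cube g) {x y : A} (γ : Path x y) :
    Path (g x) (g y) where
  toFun := g ∘ γ
  continuous_toFun := hg.continuous_comp γ.toContinuousMap
  source' := by simp
  target' := by simp

def mapZerothHomotopy (hg : ContinuousGeneratedBy Cube g) :
    ZerothHomotopy A → ZerothHomotopy B :=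
  Quotient.map g fun _ _ ⟨γ⟩ => ⟨hg.mapPath γ⟩

def mapGenLoop {n : ℕ} (hg : ContinuousGeneratedBy Cube g) {a : A} {b : B}
    (hb : g a = b) (γ : GenLoop (Fin n) A a) : GenLoop (Fin n) B b :=
  ⟨⟨g ∘ γ.1, hg γ.1⟩, fun y hy => by
    show g (γ.1 y) = b
    rw [γ.2 y hy, hb]⟩

lemma homotopic_mapGenLoop {n : ℕ} (hg : ContinuousGeneratedBy Cube g)
    {a : A} {b : B} (hb : g a = b) {γ δ : GenLoop (Fin n) A a} (h : GenLoop.Homotopic γ δ) :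
    GenLoop.Homotopic (hg.mapGenLoop hb γ) (hg.mapGenLoop hb δ) :=
  h.map fun H =>
    { toContinuousMap := ⟨g ∘ H.toContinuousMap, hg.continuous_comp H.toContinuousMap⟩
      map_zero_left := fun y => congrArg g (H.map_zero_left y)
      map_one_left := fun y => congrArg g (H.map_one_left y)
      prop' := fun t y hy => congrArg g (H.prop' t y hy) }

def mapHomotopyGroup {n : ℕ} (hg : ContinuousGeneratedBy Cube g)
    {a : A} {b : B} (hb : g a = b) : HomotopyGroup (Fin n) A a → HomotopyGroup (Fin n) B b :=
  Quotient.map (hg.mapGenLoop hb) fun _ _ => hg.homotopic_mapGenLoop hb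

end ContinuousGeneratedBy

end Topology

namespace EquivLoc

open Topology

structure CubeEquiv (A B : Type) [TopologicalSpace A] [TopologicalSpace B] extends A ≃ B where
  continuousGeneratedBy_toFun : ContinuousGeneratedBy Cube toFun
  continuousGeneratedBy_invFun : ContinuousGeneratedBy Cube invFun

namespace CubeEquiv

variable {A B A' B' : Type} [TopologicalSpace A] [TopologicalSpace B]
  [TopologicalSpace A'] [TopologicalSpace B']

instance : EquivLike (CubeEquiv A B) A B where
  coe e := e.toFun
  inv e := e.invFun
  left_inv e := e.left_inv
  right_inv e := e.right_inv
  coe_injective' e e' h _ := by cases e; cases e'; congr; exact Equiv.coe_fn_injective h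

def symm (e : CubeEquiv A B) : CubeEquiv B A :=
  ⟨e.toEquiv.symm, e.continuousGeneratedBy_invFun, e.continuousGeneratedBy_toFun⟩

lemma apply_symm_apply (e : CubeEquiv A B) (b : B) : e (e.symm b) = b :=
  e.right_inv b

lemma bijective_mapZerothHomotopy (e : CubeEquiv A B) :
    Function.Bijective e.continuousGeneratedBy_toFun.mapZerothHomotopy := by
  refine Function.bijective_iff_has_inverse.2
    ⟨e.continuousGeneratedBy_invFun.mapZerothHomotopy, fun x => ?_, fun y => ?_⟩
  · induction x using Quotient.ind
    exact congrArg _ (e.left_inv _)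
  · induction y using Quotient.ind
    exact congrArg _ (e.right_inv _)

lemma bijective_mapHomotopyGroup {n : ℕ} (e : CubeEquiv A B) {a : A} {b : B} (hb : e a = b) :
    Function.Bijective (e.continuousGeneratedBy_toFun.mapHomotopyGroup (n := n) hb) := by
  have ha : e.invFun b = a := by rw [← hb]; exact e.left_inv a
  refine Function.bijective_iff_has_inverse.2
    ⟨e.continuousGeneratedBy_invFun.mapHomotopyGroup ha, fun x => ?_, fun y => ?_⟩
  · induction x using Quotient.ind
    exact congrArg _ (Subtype.ext (ContinuousMap.ext fun _ => e.left_inv _))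
  · induction y using Quotient.ind
    exact congrArg _ (Subtype.ext (ContinuousMap.ext fun _ => e.right_inv _))

end CubeEquiv

section WeakEquiv

variable {A B A' B' : Type} [TopologicalSpace A] [TopologicalSpace B]
  [TopologicalSpace A'] [TopologicalSpace B']

lemma CubeEquiv.isWeakHomotopyEquiv (e : CubeEquiv A B) (p : C(A, B)) (he : ∀ a, e a = p a) :
    IsWeakHomotopyEquiv p := by
  refine ⟨?_, fun a n => ?_⟩
  · convert e.bijective_mapZerothHomotopy using 1
    funext x
    induction x using Quotient.ind
    exact congrArg _ (he _).symm
  · convert e.bijective_mapHomotopyGroup (he a) using 1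
    funext x
    induction x using Quotient.ind
    exact congrArg _ (Subtype.ext (ContinuousMap.ext fun _ => (he _).symm))

lemma isWeakHomotopyEquiv_of_square (eA : CubeEquiv A A') (eB : CubeEquiv B B')
    {p : C(A, B)} {p' : C(A', B')} (sq : ∀ a, p' (eA a) = eB (p a))
    (hp : IsWeakHomotopyEquiv p) : IsWeakHomotopyEquiv p' := by
  have hp' : ∀ a', p' a' = eB (p (eA.symm a')) := fun a' => by
    rw [← sq, CubeEquiv.apply_symm_apply]
  refine ⟨?_, fun a' n => ?_⟩
  · convert eB.bijective_mapZerothHomotopy.comp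
      (hp.1.comp eA.symm.bijective_mapZerothHomotopy) using 1
    funext x
    induction x using Quotient.ind
    exact congrArg _ (hp' _)
  · convert (eB.bijective_mapHomotopyGroup (hp' a').symm).comp
      ((hp.2 _ n).comp (eA.symm.bijective_mapHomotopyGroup rfl)) using 1
    funext x
    induction x using Quotient.ind
    exact congrArg _ (Subtype.ext (ContinuousMap.ext fun _ => hp' _))

end WeakEquiv

section GSpaces

variable {G : Type} [Group G] [TopologicalSpace G]

lemma gFibrant (X : GSpace G) : GFibrant X := by
  intro H _ n h K _
  exact ⟨h.comp ⟨Prod.fst, continuous_fst⟩, fun _ => rfl,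
    fun _ => Subtype.ext (Subsingleton.elim (α := PUnit) _ _)⟩

structure GCubeEquiv (M N : GSpace G) extends CubeEquiv M.carrier N.carrier where
  map_smul' : ∀ (g : G) (x : M.carrier), toFun (g • x) = g • toFun x

namespace GCubeEquiv

variable {M N : GSpace G}

def symm (e : GCubeEquiv M N) : GCubeEquiv N M where
  toCubeEquiv := e.toCubeEquiv.symm
  map_smul' g y := e.toEquiv.injective <| by
    change e.toFun (e.invFun (g • y)) = e.toFun (g • e.invFun y)
    rw [e.map_smul', e.right_inv, e.right_inv]

def fix (e : GCubeEquiv M N) (H : Subgroup G) : CubeEquiv (Fix H M) (Fix H N) where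
  toFun := Subtype.map e.toFun fun x hx h hh => by rw [← e.map_smul', hx h hh]
  invFun := Subtype.map e.invFun fun y hy h hh =>
    (e.symm.map_smul' h y).symm.trans (congrArg e.invFun (hy h hh))
  left_inv x := Subtype.ext (e.left_inv x.1)
  right_inv y := Subtype.ext (e.right_inv y.1)
  continuousGeneratedBy_toFun := e.continuousGeneratedBy_toFun.subtype_map _
  continuousGeneratedBy_invFun := e.continuousGeneratedBy_invFun.subtype_map _

end GCubeEquiv

lemma IsGWeakEquiv.of_square {M₁ N₁ M₂ N₂ : GSpace G} (eM : GCubeEquiv M₁ M₂)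
    (eN : GCubeEquiv N₁ N₂) {p : GMap M₁ N₁} {p' : GMap M₂ N₂}
    (sq : ∀ x, p' (eM.toCubeEquiv x) = eN.toCubeEquiv (p x)) (hp : IsGWeakEquiv p) :
    IsGWeakEquiv p' := fun H hH =>
  isWeakHomotopyEquiv_of_square (p := p.fixCM H) (p' := p'.fixCM H) (eM.fix H) (eN.fix H)
    (fun x => Subtype.ext (sq x.1)) (hp H hH)

lemma isGWeakEquiv_iff_of_square {M₁ N₁ M₂ N₂ : GSpace G} (eM : GCubeEquiv M₁ M₂)
    (eN : GCubeEquiv N₁ N₂) {p : GMap M₁ N₁} {p' : GMap M₂ N₂}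
    (sq : ∀ x, p' (eM.toCubeEquiv x) = eN.toCubeEquiv (p x)) :
    IsGWeakEquiv p ↔ IsGWeakEquiv p' := by
  refine ⟨.of_square eM eN sq, .of_square eM.symm eN.symm fun y => ?_⟩
  apply eN.toEquiv.injective
  change eN.toFun (p (eM.invFun y)) = eN.toFun (eN.invFun (p' y))
  rw [eN.right_inv]
  exact (sq (eM.invFun y)).symm.trans (congrArg p' (eM.right_inv y))

lemma GCubeEquiv.isGWeakEquiv {M N : GSpace G} (e : GCubeEquiv M N) (p : GMap M N)
    (he : ∀ x, e.toCubeEquiv x = p x) : IsGWeakEquiv p := fun H _ =>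
  (e.fix H).isWeakHomotopyEquiv _ fun x => Subtype.ext (he x.1)

def cubeGenerated (A : GSpacePt G) : GSpacePt G where
  carrier := WithGeneratedByTopology Cube A.carrier
  mulInst := A.mulInst
  smul_cont g := by
    exact ((A.smul_cont g).continuousGeneratedBy (X := Cube)).continuousMap.continuous
  pt := A.pt
  pt_fixed := A.pt_fixed

def cubeGeneratedCounit (A : GSpacePt G) : GMapPt (cubeGenerated A) A :=
  ⟨⟨⟨fun x => x, WithGeneratedByTopology.continuous_equiv⟩, fun _ _ => rfl⟩, rfl⟩

def cubeGeneratedGCubeEquiv (A : GSpacePt G) :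
    GCubeEquiv (cubeGenerated A).toGSpace A.toGSpace where
  toEquiv := WithGeneratedByTopology.equiv (X := Cube)
  continuousGeneratedBy_toFun :=
    (WithGeneratedByTopology.continuous_equiv (X := Cube)).continuousGeneratedBy
  continuousGeneratedBy_invFun :=
    (WithGeneratedByTopology.equivSymmAsContinuousMapGeneratedBy Cube A.carrier).prop
  map_smul' _ _ := rfl

lemma isGTrivFib_cubeGeneratedCounit (A : GSpacePt G) :
    IsGTrivFib (cubeGeneratedCounit A).toGMap := by
  refine ⟨fun H _ n h K hK => ?_,
    (cubeGeneratedGCubeEquiv A).isGWeakEquiv _ fun _ => rfl⟩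
  refine ⟨⟨fun w => ⟨(K w).1, (K w).2⟩, Continuous.subtype_mk ?_ _⟩,
    fun z => Subtype.ext (congrArg Subtype.val (hK z)), fun _ => rfl⟩
  exact (IsGeneratedBy.equiv_symm_comp_continuous_iff Cube _).2
    (continuous_subtype_val.comp K.continuous)

lemma isGeneratedBy_cube_of_gCofibrantPt {A : GSpacePt G} (hA : GCofibrantPt A) :
    IsGeneratedBy Cube A.carrier := by
  obtain ⟨l, hl⟩ := hA (cubeGeneratedCounit A) (isGTrivFib_cubeGeneratedCounit A) (GMapPt.id A)
  have hl' : ∀ x, l.toCM x = x := fun x => congrArg (fun m : GMapPt A A => m.toCM x) hl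
  exact ⟨(continuous_congr hl').1 l.toCM.continuous⟩

section SuspLoop

variable (A X : GSpacePt G)

def suspQuot : C(A.carrier × I, (Susp A).carrier) :=
  ⟨Quot.mk _, continuous_quot_mk⟩

def loopVal : C((Loop X).carrier, C(I, X.carrier)) :=
  ⟨Subtype.val, continuous_subtype_val⟩

variable {A X}

lemma susp_mk_eq_pt {a : A.carrier} {t : I} (h : t = 0 ∨ t = 1 ∨ a = A.pt) :
    suspQuot A (a, t) = (Susp A).pt :=
  Quot.sound (Or.inr ⟨h, Or.inl rfl⟩)

lemma suspMap_mk_eq_pt (φ : (mapGPt (Susp A) X).carrier) {a : A.carrier} {t : I}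
    (h : t = 0 ∨ t = 1 ∨ a = A.pt) : φ.1 (suspQuot A (a, t)) = X.pt :=
  (congrArg φ.1 (susp_mk_eq_pt h)).trans φ.2

lemma loopMap_apply_eq_pt (ψ : (mapGPt A (Loop X)).carrier) {a : A.carrier} {t : I}
    (h : t = 0 ∨ t = 1 ∨ a = A.pt) : (ψ.1 a).1 t = X.pt := by
  rcases h with rfl | rfl | rfl
  · exact (ψ.1 a).2.1
  · exact (ψ.1 a).2.2
  · rw [ψ.2]; rfl

variable (A X)

def suspToLoop (φ : (mapGPt (Susp A) X).carrier) : (mapGPt A (Loop X)).carrier :=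
  ⟨⟨fun a => ⟨(φ.1.comp (suspQuot A)).curry a,
      suspMap_mk_eq_pt φ (Or.inl rfl), suspMap_mk_eq_pt φ (Or.inr (Or.inl rfl))⟩,
    (φ.1.comp (suspQuot A)).curry.continuous.subtype_mk _⟩,
   Subtype.ext (ContinuousMap.ext fun _ => suspMap_mk_eq_pt φ (Or.inr (Or.inr rfl)))⟩

def loopToSusp (ψ : (mapGPt A (Loop X)).carrier) : (mapGPt (Susp A) X).carrier :=
  ⟨⟨Quot.lift (fun z => (ψ.1 z.1).1 z.2) fun z w h => by
      rcases h with rfl | ⟨hz, hw⟩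
      · rfl
      · exact (loopMap_apply_eq_pt ψ hz).trans (loopMap_apply_eq_pt ψ hw).symm,
    continuous_quot_lift _
      (ContinuousMap.continuous_uncurry_of_continuous ((loopVal X).comp ψ.1))⟩,
   loopMap_apply_eq_pt ψ (Or.inl rfl)⟩

def suspLoopEquiv : (mapGPt (Susp A) X).carrier ≃ (mapGPt A (Loop X)).carrier where
  toFun := suspToLoop A X
  invFun := loopToSusp A X
  left_inv _ := Subtype.ext (ContinuousMap.ext fun s => Quot.inductionOn s fun _ => rfl)
  right_inv _ := rfl

lemma suspLoopEquiv_smul (g : G) (φ : (mapGPt (Susp A) X).carrier) :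
    suspLoopEquiv A X (g • φ) = g • suspLoopEquiv A X φ :=
  Subtype.ext <| ContinuousMap.ext fun a => Subtype.ext <| ContinuousMap.ext fun t => by
    change g • φ.1 (g⁻¹ • Quot.mk (suspRel A) (a, t)) =
      g • φ.1 (Quot.mk (suspRel A) (g⁻¹ • a, t))
    rw [susp_smul_mk]

lemma continuousGeneratedBy_suspToLoop [IsGeneratedBy Cube A.carrier] :
    ContinuousGeneratedBy Cube (suspToLoop A X) := by
  intro n u
  have key : Continuous fun p : A.carrier × (Cube n × I) =>
      (u p.2.1).1 (suspQuot A (p.1, p.2.2)) := by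
    refine continuous_prod_of_forall_cube fun m c => ?_
    let F : C(Cube n, C(Cube m × I, X.carrier)) :=
      ⟨fun z => (u z).1.comp ((suspQuot A).comp (c.prodMap (.id I))),
        (ContinuousMap.continuous_precomp _).comp (continuous_subtype_val.comp u.continuous)⟩
    exact (ContinuousMap.continuous_uncurry_of_continuous F).comp
      ((continuous_fst.comp continuous_snd).prodMk
        (continuous_fst.prodMk (continuous_snd.comp continuous_snd)))
  refine Continuous.subtype_mk (ContinuousMap.continuous_of_continuous_uncurry _
    (Continuous.subtype_mk (ContinuousMap.continuous_of_continuous_uncurry _ ?_) _)) _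
  exact key.comp ((continuous_snd.comp continuous_fst).prodMk
    ((continuous_fst.comp continuous_fst).prodMk continuous_snd))

lemma continuousGeneratedBy_loopToSusp [IsGeneratedBy Cube A.carrier] :
    ContinuousGeneratedBy Cube (loopToSusp A X) := by
  intro n v
  have key : Continuous fun p : A.carrier × (Cube n × I) => ((v p.2.1).1 p.1).1 p.2.2 := by
    refine continuous_prod_of_forall_cube fun m c => ?_
    let F : C(Cube n, C(Cube m, C(I, X.carrier))) :=
      ⟨fun z => (loopVal X).comp ((v z).1.comp c),
        (ContinuousMap.continuous_postcomp _).comp ((ContinuousMap.continuous_precomp c).comp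
          (continuous_subtype_val.comp v.continuous))⟩
    exact ((ContinuousMap.continuous_uncurry_of_continuous F).comp
      ((continuous_fst.comp continuous_snd).prodMk continuous_fst)).eval
      (continuous_snd.comp continuous_snd)
  refine Continuous.subtype_mk (ContinuousMap.continuous_of_continuous_uncurry _ ?_) _
  refine isQuotientMap_quot_mk.continuous_lift_prod_right ?_
  exact key.comp ((continuous_fst.comp continuous_snd).prodMk
    (continuous_fst.prodMk (continuous_snd.comp continuous_snd)))

def suspLoopGCubeEquiv [IsGeneratedBy Cube A.carrier] :
    GCubeEquiv (mapGPt (Susp A) X).toGSpace (mapGPt A (Loop X)).toGSpace where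
  toEquiv := suspLoopEquiv A X
  continuousGeneratedBy_toFun := continuousGeneratedBy_suspToLoop A X
  continuousGeneratedBy_invFun := continuousGeneratedBy_loopToSusp A X
  map_smul' := suspLoopEquiv_smul A X

end SuspLoop

lemma precompGPt_suspLoopEquiv {A B : GSpacePt G} (f : GMapPt A B) (X : GSpacePt G)
    (φ : (mapGPt (Susp B) X).carrier) :
    (precompGPt f (Loop X)).toCM (suspLoopEquiv B X φ) =
      suspLoopEquiv A X ((precompGPt (SuspMap f) X).toCM φ) :=
  rfl

end GSpaces

theorem suspension_local_iff_loop_local_general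
    {G : Type} [Group G] [TopologicalSpace G]
    {A B : GSpacePt G} (f : GMapPt A B) (hA : GCofibrantPt A) (hB : GCofibrantPt B)
    (X : GSpacePt G) :
    IsFLocalPt (SuspMap f) X ↔ IsFLocalPt f (Loop X) := by
  have := isGeneratedBy_cube_of_gCofibrantPt hA
  have := isGeneratedBy_cube_of_gCofibrantPt hB
  exact and_congr (iff_of_true (gFibrant _) (gFibrant _))
    (isGWeakEquiv_iff_of_square (suspLoopGCubeEquiv B X) (suspLoopGCubeEquiv A X)
      (precompGPt_suspLoopEquiv f X))

theorem suspension_local_iff_loop_local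
    {E : Type} [NormedAddCommGroup E] [NormedSpace ℝ E]
    {HM : Type} [TopologicalSpace HM] (IM : ModelWithCorners ℝ E HM)
    {G : Type} [Group G] [TopologicalSpace G] [ChartedSpace HM G] [LieGroup IM (⊤ : ℕ∞) G]
    [CompactSpace G]
    {A B : GSpacePt G} (f : GMapPt A B) (hA : GCofibrantPt A) (hB : GCofibrantPt B)
    (X : GSpacePt G) (hX : GConnected X.toGSpace) :
    IsFLocalPt (SuspMap f) X ↔ IsFLocalPt f (Loop X) :=
  suspension_local_iff_loop_local_general f hA hB X

end EquivLoc
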